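/- arXiv:1904.08145 — 2 statements merged into one kernel-verified Lean document; each statement's English description precedes it below -/
import Mathlib

section
/- Under the hypotheses of the Codazzi and Gauss equations on a surface in a space form, the trace-free second fundamental form satisfies the elliptic identity Δh̊_{ij} = R·h̊_{ij} + ∇_i∇_j H − (1/2)(ΔH)g_{ij}, where R is the scalar curvature. -/
/-- Eq. (9) of the paper: for a symmetric Codazzi tensor on a surface
(local orthonormal frame), the trace-free part satisfies the elliptic identity
`Δh̊_{ij} = R h̊_{ij} + ∇_i∇_j H - (1/2)(ΔH) δ_{ij}`. -/
theorem laplacian_tracefree_identity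
    (h0 : Fin 2 → Fin 2 → ℝ) (R : ℝ)
    (D2h0 : Fin 2 → Fin 2 → Fin 2 → Fin 2 → ℝ)  -- D2h0 l k i j = ∇_l∇_k h̊_{ij}
    (D2H : Fin 2 → Fin 2 → ℝ)  -- D2H i j = ∇_i∇_j H
    -- covariant derivative of the trace-free Codazzi identity (6):
    (hCod2 : ∀ l k i j, D2h0 l k i j - D2h0 l j i k
      = (1 / 2) * (D2H l j * (if i = k then (1 : ℝ) else 0)
          - D2H l k * (if i = j then (1 : ℝ) else 0)))
    -- commutation rule, valid in dimension 2:
    (hcomm : ∀ i j, ∑ k, D2h0 k j i k = (∑ k, D2h0 j k i k) + R * h0 i j)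
    -- derivative of the divergence identity (7):
    (hdiv2 : ∀ j i, ∑ k, D2h0 j k i k = (1 / 2) * D2H j i)
    -- symmetry of the Hessian of H:
    (hHess : ∀ i j, D2H i j = D2H j i) :
    ∀ i j, ∑ l, D2h0 l l i j
      = R * h0 i j + D2H i j
        - (1 / 2) * (∑ k, D2H k k) * (if i = j then (1 : ℝ) else 0) := by
  intro i j
  have k0 := hCod2 0 0 i j
  have k1 := hCod2 1 1 i j
  have hc := hcomm i j
  have hd := hdiv2 j i
  have hH := hHess 0 1
  clear hCod2 hcomm hdiv2 hHess
  simp only [Fin.sum_univ_two] at hc hd ⊢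
  fin_cases i <;> fin_cases j <;>
    norm_num at k0 k1 hc hd ⊢ <;> linarith
end

section
/- On a 2-dimensional Riemannian manifold with h a symmetric Codazzi tensor, H = tr h, h̊ its trace-free part, the Kato-type identity 2|h̊|²(|∇h̊|² − (1/2)|∇H|²) = 4|∇|h̊||²|h̊|² − 2 h̊_{ij} ∇_i|h̊|² ∇_j H holds pointwise (at points where |h̊| is differentiable). -/
/-- Eq. (12) of the paper (Kato-type identity): at points where `|h̊| > 0`,
`2|h̊|²(|∇h̊|² - (1/2)|∇H|²) = 4|∇|h̊||²|h̊|² - 2 h̊_{ij} ∇_i|h̊|² ∇_j H`,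
where `|∇|h̊||² = |∇|h̊|²|² / (4|h̊|²)`. -/
theorem kato_type_identity
    (h0 : Fin 2 → Fin 2 → ℝ)
    (hsym : ∀ i j, h0 i j = h0 j i) (htf : ∑ i, h0 i i = 0)
    (Dh0 : Fin 2 → Fin 2 → Fin 2 → ℝ)  -- Dh0 k i j = ∇_k h̊_{ij}
    (DH : Fin 2 → ℝ)  -- DH k = ∇_k H
    (hDsym : ∀ k i j, Dh0 k i j = Dh0 k j i)
    (hDtf : ∀ k, ∑ i, Dh0 k i i = 0)
    (hCod : ∀ k i j, Dh0 k i j - Dh0 j i k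
      = (1 / 2) * (DH j * (if i = k then (1 : ℝ) else 0)
          - DH k * (if i = j then (1 : ℝ) else 0)))
    (n2 : ℝ) (hn2 : n2 = ∑ i, ∑ j, (h0 i j) ^ 2) (hpos : 0 < n2)
    (grad : Fin 2 → ℝ)  -- grad k = ∇_k |h̊|²
    (hgrad : ∀ k, grad k = 2 * ∑ i, ∑ j, h0 i j * Dh0 k i j) :
    2 * n2 * ((∑ k, ∑ i, ∑ j, (Dh0 k i j) ^ 2) - (1 / 2) * ∑ k, (DH k) ^ 2)
      = 4 * ((∑ k, (grad k) ^ 2) / (4 * n2)) * n2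
        - 2 * ∑ i, ∑ j, h0 i j * grad i * DH j := by
  have hb := hsym 1 0
  have h11 : h0 1 1 = - h0 0 0 := by
    have := htf; simp [Fin.sum_univ_two] at this; linarith
  have hDs0 := hDsym 0 1 0
  have hDs1 := hDsym 1 1 0
  have hDt0 : Dh0 0 1 1 = - Dh0 0 0 0 := by
    have := hDtf 0; simp [Fin.sum_univ_two] at this; linarith
  have hDt1 : Dh0 1 1 1 = - Dh0 1 0 0 := by
    have := hDtf 1; simp [Fin.sum_univ_two] at this; linarith
  have hD1 : DH 1 = 2 * (Dh0 0 0 1 - Dh0 1 0 0) := by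
    have := hCod 0 0 1; norm_num at this; linarith
  have hD0 : DH 0 = 2 * (Dh0 1 1 0 - Dh0 0 1 1) := by
    have := hCod 0 1 1; norm_num at this; linarith
  have hg0 := hgrad 0
  have hg1 := hgrad 1
  have hne : n2 ≠ 0 := ne_of_gt hpos
  simp only [Fin.sum_univ_two] at hg0 hg1 hn2 ⊢
  simp only [hb, h11, hDs0, hDs1, hDt0, hDt1] at hg0 hg1 hn2 hD0 ⊢
  rw [hn2] at hpos
  have hne2 : (0:ℝ) < h0 0 0 ^ 2 + h0 0 1 ^ 2 := by nlinarith [hpos]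
  rw [hg0, hg1, hD0, hD1, hn2]
  have e4 : h0 0 0 ^ 2 + h0 0 1 ^ 2 + (h0 0 1 ^ 2 + (-h0 0 0) ^ 2)
      = 2 * (h0 0 0 ^ 2 + h0 0 1 ^ 2) := by ring
  rw [e4]
  field_simp [hne2.ne']
  ring
end
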